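/- arXiv:2308.08798 — 2 statements merged into one kernel-verified Lean document; each statement's English description precedes it below -/
import Mathlib

section
/- Every totally even edge set E of the n × n grid is symmetric under the central point symmetry of the grid: an edge e belongs to E if and only if its image under the map (x,y) ↦ (n+1−x, n+1−y) belongs to E. Moreover E is symmetric under reflection in each of the two diagonals of the grid ((x,y) ↦ (y,x) and (x,y) ↦ (n+1−y, n+1−x)). -/
namespace Slitherlink

/-- Vertices of grids: integer points of the plane. -/
abbrev V : Type := ℤ × ℤ

/-- Edges: unordered pairs of vertices. -/
abbrev Edge : Type := Sym2 V

/-- `p` is a vertex of the `m × n` grid. -/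
def gridVertex (m n : ℤ) (p : V) : Prop :=
  1 ≤ p.1 ∧ p.1 ≤ m ∧ 1 ≤ p.2 ∧ p.2 ≤ n

/-- `e` is an edge of the `m × n` grid: a unit segment between grid vertices. -/
def gridEdge (m n : ℤ) (e : Edge) : Prop :=
  ∃ p q : V, e = s(p, q) ∧ gridVertex m n p ∧ gridVertex m n q ∧
    ((q.1 = p.1 + 1 ∧ q.2 = p.2) ∨ (q.1 = p.1 ∧ q.2 = p.2 + 1))

/-- The four boundary edges of the unit cell with lower-left corner `(a, b)`. -/
def cellEdges (a b : ℤ) : Set Edge :=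
  {s((a, b), (a + 1, b)), s((a, b), (a, b + 1)),
   s((a + 1, b), (a + 1, b + 1)), s((a, b + 1), (a + 1, b + 1))}

/-- `(a, b)` is the lower-left corner of a cell of the `m × n` grid. -/
def isCell (m n a b : ℤ) : Prop := 1 ≤ a ∧ a + 1 ≤ m ∧ 1 ≤ b ∧ b + 1 ≤ n

/-- Number of edges of `E` incident with the vertex `p`. -/
noncomputable def degree (E : Set Edge) (p : V) : ℕ := {e ∈ E | p ∈ e}.ncard

/-- Number of edges of `E` among the four boundary edges of the cell at `(a, b)`. -/
noncomputable def cellCount (E : Set Edge) (a b : ℤ) : ℕ := (E ∩ cellEdges a b).ncard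

/-- A set of edges of the `m × n` grid is totally even if every vertex is incident with an
even number of its edges and every cell contains an even number of its edges. -/
def TotallyEven (m n : ℤ) (E : Set Edge) : Prop :=
  (∀ e ∈ E, gridEdge m n e) ∧
  (∀ p : V, Even (degree E p)) ∧
  (∀ a b : ℤ, isCell m n a b → Even (cellCount E a b))

/-- The graph on `V` whose edges are the members of `C`. -/
def cycleGraph (C : Set Edge) : SimpleGraph V where
  Adj p q := p ≠ q ∧ s(p, q) ∈ C
  symm := by
    constructor
    intro p q h
    refine ⟨h.1.symm, ?_⟩
    rw [Sym2.eq_swap]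
    exact h.2
  loopless := by constructor; intro p h; exact h.1 rfl

/-- `C` is a cycle in the `m × n` grid: a nonempty connected 2-regular subgraph. -/
def IsCycle (m n : ℤ) (C : Set Edge) : Prop :=
  C.Nonempty ∧ (∀ e ∈ C, gridEdge m n e) ∧
  (∀ p : V, degree C p = 0 ∨ degree C p = 2) ∧
  (∀ p q : V, (∃ e ∈ C, p ∈ e) → (∃ e ∈ C, q ∈ e) → (cycleGraph C).Reachable p q)

/-- Two edge sets have the same signature on the `m × n` grid. -/
def SameSignature (m n : ℤ) (C₁ C₂ : Set Edge) : Prop :=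
  ∀ a b : ℤ, isCell m n a b → cellCount C₁ a b = cellCount C₂ a b

/-- Membership in the closed diamond `D(i)` of the `n × n` grid. -/
def inDiamond (n i : ℤ) (p : V) : Prop :=
  i + 1 ≤ p.1 + p.2 ∧ p.1 + p.2 ≤ 2 * n - i + 1 ∧ -i ≤ p.1 - p.2 ∧ p.1 - p.2 ≤ i

/-- The diamond edge set `B(i)`: all edges of the `n × n` grid contained in `D(i)`. -/
def diamondSet (n i : ℤ) : Set Edge :=
  {e | gridEdge n n e ∧ ∀ p ∈ e, inDiamond n i p}

/-- The symmetric difference of two edge sets. -/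
def sdiff (A B : Set Edge) : Set Edge := (A \ B) ∪ (B \ A)



/-! ### Auxiliary machinery for `stmt3` -/

section Aux
open Classical

open Classical in
/-- mod-2 indicator of membership in an edge set. -/
noncomputable def ind (E : Set Edge) (e : Edge) : ZMod 2 := if e ∈ E then 1 else 0

/-- indicator of the horizontal edge from `(x,y)` to `(x+1,y)`. -/
noncomputable def chH (E : Set Edge) (x y : ℤ) : ZMod 2 := ind E s((x,y),(x+1,y))
/-- indicator of the vertical edge from `(x,y)` to `(x,y+1)`. -/
noncomputable def chV (E : Set Edge) (x y : ℤ) : ZMod 2 := ind E s((x,y),(x,y+1))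

lemma ind_of_mem {E : Set Edge} {e : Edge} (h : e ∈ E) : ind E e = 1 := by
  simp [ind, h]

lemma mem_of_ind {E : Set Edge} {e : Edge} (h : ind E e = 1) : e ∈ E := by
  by_contra hc; simp [ind, hc] at h

lemma memBoundsH {n : ℤ} {E : Set Edge} (hE : TotallyEven n n E) {x y : ℤ}
    (h : s(((x:ℤ),(y:ℤ)), (x+1, y)) ∈ E) : 1 ≤ x ∧ x + 1 ≤ n ∧ 1 ≤ y ∧ y ≤ n := by
  obtain ⟨p, q, hpq, hp, hq, -⟩ := hE.1 _ h
  rw [Sym2.eq_iff] at hpq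
  rcases hpq with ⟨h1, h2⟩ | ⟨h1, h2⟩ <;>
  · subst h1; subst h2
    obtain ⟨a1, a2, a3, a4⟩ := hp
    obtain ⟨b1, b2, b3, b4⟩ := hq
    simp only at *
    omega

lemma memBoundsV {n : ℤ} {E : Set Edge} (hE : TotallyEven n n E) {x y : ℤ}
    (h : s(((x:ℤ),(y:ℤ)), (x, y+1)) ∈ E) : 1 ≤ x ∧ x ≤ n ∧ 1 ≤ y ∧ y + 1 ≤ n := by
  obtain ⟨p, q, hpq, hp, hq, -⟩ := hE.1 _ h
  rw [Sym2.eq_iff] at hpq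
  rcases hpq with ⟨h1, h2⟩ | ⟨h1, h2⟩ <;>
  · subst h1; subst h2
    obtain ⟨a1, a2, a3, a4⟩ := hp
    obtain ⟨b1, b2, b3, b4⟩ := hq
    simp only at *
    omega

lemma chH_zero {n : ℤ} {E : Set Edge} (hE : TotallyEven n n E) {x y : ℤ}
    (h : x < 1 ∨ n ≤ x ∨ y < 1 ∨ n < y) : chH E x y = 0 := by
  unfold chH ind
  split
  · next hmem => exact absurd (memBoundsH hE hmem) (by omega)
  · rfl

lemma chV_zero {n : ℤ} {E : Set Edge} (hE : TotallyEven n n E) {x y : ℤ}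
    (h : x < 1 ∨ n < x ∨ y < 1 ∨ n ≤ y) : chV E x y = 0 := by
  unfold chV ind
  split
  · next hmem => exact absurd (memBoundsV hE hmem) (by omega)
  · rfl

lemma inter_single_ncard {α : Type*} (S : Set α) (a : α) :
    (S ∩ {a}).ncard = if a ∈ S then 1 else 0 := by
  split
  · next h =>
    rw [Set.inter_eq_self_of_subset_right (by simpa using h)]
    exact Set.ncard_singleton a
  · next h =>
    have : S ∩ {a} = ∅ := by ext x; simp; rintro hx rfl; exact h hx
    simp [this]

lemma inter_insert_split {α : Type*} (S : Set α) (a : α) (t : Set α) :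
    S ∩ insert a t = (S ∩ {a}) ∪ (S ∩ t) := by
  ext x; simp [Set.mem_insert_iff]; tauto

lemma quad_ncard {α : Type*} (S : Set α) (a b c d : α)
    (hab : a ≠ b) (hac : a ≠ c) (had : a ≠ d) (hbc : b ≠ c) (hbd : b ≠ d) (hcd : c ≠ d) :
    (S ∩ {a, b, c, d}).ncard =
      (if a ∈ S then 1 else 0) + (if b ∈ S then 1 else 0) +
      (if c ∈ S then 1 else 0) + (if d ∈ S then 1 else 0) := by
  have fin1 : (S ∩ {d} : Set α).Finite :=
    Set.Finite.subset (Set.finite_singleton d) Set.inter_subset_right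
  have fin2 : (S ∩ {c, d} : Set α).Finite :=
    Set.Finite.subset (Set.toFinite _) Set.inter_subset_right
  have fin3 : (S ∩ {b, c, d} : Set α).Finite :=
    Set.Finite.subset (Set.toFinite _) Set.inter_subset_right
  have dj : ∀ (x : α) (t : Set α), x ∉ t → Disjoint (S ∩ {x}) (S ∩ t) := by
    intro x t hx
    rw [Set.disjoint_left]
    rintro y ⟨-, hy⟩ ⟨-, hy'⟩
    simp at hy; subst hy; exact hx hy'
  rw [inter_insert_split, Set.ncard_union_eq (dj a _ (by simp [hab, hac, had]))
        (Set.Finite.subset (Set.finite_singleton a) Set.inter_subset_right) fin3,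
      inter_insert_split, Set.ncard_union_eq (dj b _ (by simp [hbc, hbd]))
        (Set.Finite.subset (Set.finite_singleton b) Set.inter_subset_right) fin2,
      inter_insert_split, Set.ncard_union_eq (dj c _ (by simp [hcd]))
        (Set.Finite.subset (Set.finite_singleton c) Set.inter_subset_right) fin1,
      inter_single_ncard, inter_single_ncard, inter_single_ncard, inter_single_ncard]
  ring

lemma quad_parity {α : Type*} (S : Set α) (a b c d : α)
    (hab : a ≠ b) (hac : a ≠ c) (had : a ≠ d) (hbc : b ≠ c) (hbd : b ≠ d) (hcd : c ≠ d)
    (hev : Even (S ∩ {a, b, c, d}).ncard) :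
    (if a ∈ S then (1 : ZMod 2) else 0) + (if b ∈ S then 1 else 0) +
      (if c ∈ S then 1 else 0) + (if d ∈ S then 1 else 0) = 0 := by
  rw [quad_ncard S a b c d hab hac had hbc hbd hcd] at hev
  have := (ZMod.natCast_eq_zero_iff _ 2).mpr hev.two_dvd
  push_cast at this
  exact this

lemma vertexRel {n : ℤ} {E : Set Edge} (hE : TotallyEven n n E) (x y : ℤ) :
    chH E (x-1) y + chH E x y + chV E x (y-1) + chV E x y = 0 := by
  have hset : {e ∈ E | ((x,y) : V) ∈ e} = E ∩ {s(((x-1 : ℤ),(y:ℤ)),((x:ℤ),(y:ℤ))),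
      s(((x:ℤ),(y:ℤ)),((x+1:ℤ),(y:ℤ))), s(((x:ℤ),(y-1:ℤ)),((x:ℤ),(y:ℤ))),
      s(((x:ℤ),(y:ℤ)),((x:ℤ),(y+1:ℤ)))} := by
    ext e
    constructor
    · rintro ⟨heE, hpe⟩
      refine ⟨heE, ?_⟩
      obtain ⟨p, q, hpq, -, -, hoff⟩ := hE.1 _ heE
      rw [hpq] at hpe ⊢
      rw [Sym2.mem_iff] at hpe
      simp only [Set.mem_insert_iff, Set.mem_singleton_iff, Sym2.eq_iff, Prod.ext_iff]
      simp only [Prod.ext_iff] at hpe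
      rcases hpe with ⟨rfl, rfl⟩ | ⟨h1, h2⟩
      · rcases hoff with ⟨h1, h2⟩ | ⟨h1, h2⟩
        · exact Or.inr (Or.inl (Or.inl ⟨⟨rfl, rfl⟩, h1, h2⟩))
        · exact Or.inr (Or.inr (Or.inr (Or.inl ⟨⟨rfl, rfl⟩, h1, h2⟩)))
      · subst h1; subst h2
        rcases hoff with ⟨h1, h2⟩ | ⟨h1, h2⟩
        · refine Or.inl (Or.inl ⟨⟨?_, ?_⟩, rfl, rfl⟩) <;> omega
        · refine Or.inr (Or.inr (Or.inl (Or.inl ⟨⟨?_, ?_⟩, rfl, rfl⟩))) <;> omega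
    · rintro ⟨heE, he4⟩
      refine ⟨heE, ?_⟩
      simp only [Set.mem_insert_iff, Set.mem_singleton_iff] at he4
      rcases he4 with rfl | rfl | rfl | rfl <;> simp [Sym2.mem_iff]
  have hev := hE.2.1 ((x,y) : V)
  unfold degree at hev
  rw [hset] at hev
  have hq := quad_parity E _ _ _ _
    (by simp only [ne_eq, Sym2.eq_iff, Prod.mk.injEq]; omega)
    (by simp only [ne_eq, Sym2.eq_iff, Prod.mk.injEq]; omega)
    (by simp only [ne_eq, Sym2.eq_iff, Prod.mk.injEq]; omega)
    (by simp only [ne_eq, Sym2.eq_iff, Prod.mk.injEq]; omega)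
    (by simp only [ne_eq, Sym2.eq_iff, Prod.mk.injEq]; omega)
    (by simp only [ne_eq, Sym2.eq_iff, Prod.mk.injEq]; omega)
    hev
  have h1 : chH E (x-1) y = (if s(((x-1 : ℤ),(y:ℤ)),((x:ℤ),(y:ℤ))) ∈ E then (1:ZMod 2) else 0) := by
    unfold chH ind
    rw [show x - 1 + 1 = x by ring]
  have h3 : chV E x (y-1) = (if s(((x:ℤ),(y-1:ℤ)),((x:ℤ),(y:ℤ))) ∈ E then (1:ZMod 2) else 0) := by
    unfold chV ind
    rw [show y - 1 + 1 = y by ring]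
  rw [h1, h3]
  calc _ = (if s(((x-1 : ℤ),(y:ℤ)),((x:ℤ),(y:ℤ))) ∈ E then (1:ZMod 2) else 0)
        + (if s(((x:ℤ),(y:ℤ)),((x+1:ℤ),(y:ℤ))) ∈ E then (1:ZMod 2) else 0)
        + (if s(((x:ℤ),(y-1:ℤ)),((x:ℤ),(y:ℤ))) ∈ E then (1:ZMod 2) else 0)
        + (if s(((x:ℤ),(y:ℤ)),((x:ℤ),(y+1:ℤ))) ∈ E then (1:ZMod 2) else 0) := rfl
    _ = 0 := hq

lemma cellRel {n : ℤ} {E : Set Edge} (hE : TotallyEven n n E) {a b : ℤ}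
    (h1 : 1 ≤ a) (h2 : a + 1 ≤ n) (h3 : 1 ≤ b) (h4 : b + 1 ≤ n) :
    chH E a b + chV E a b + chV E (a+1) b + chH E a (b+1) = 0 := by
  have hev := hE.2.2 a b ⟨h1, h2, h3, h4⟩
  unfold cellCount cellEdges at hev
  have hq := quad_parity E _ _ _ _
    (by simp only [ne_eq, Sym2.eq_iff, Prod.mk.injEq]; omega)
    (by simp only [ne_eq, Sym2.eq_iff, Prod.mk.injEq]; omega)
    (by simp only [ne_eq, Sym2.eq_iff, Prod.mk.injEq]; omega)
    (by simp only [ne_eq, Sym2.eq_iff, Prod.mk.injEq]; omega)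
    (by simp only [ne_eq, Sym2.eq_iff, Prod.mk.injEq]; omega)
    (by simp only [ne_eq, Sym2.eq_iff, Prod.mk.injEq]; omega)
    hev
  exact hq

/-- `U`-invariant: constant along antidiagonals. -/
noncomputable def Uf (E : Set Edge) (a b : ℤ) : ZMod 2 := chH E a b + chV E a (b-1)
/-- `W`-invariant: constant along diagonals. -/
noncomputable def Wf (E : Set Edge) (a b : ℤ) : ZMod 2 := chH E (a-1) b + chV E a (b-1)

lemma Ustep {n : ℤ} {E : Set Edge} (hE : TotallyEven n n E) {a b : ℤ}
    (h1 : 1 ≤ a) (h2 : a + 1 ≤ n) (h3 : 1 ≤ b) (h4 : b + 1 ≤ n) :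
    Uf E (a+1) b = Uf E a (b+1) := by
  have hV := vertexRel hE (a+1) b
  rw [show a+1-1 = a by ring] at hV
  have hC := cellRel hE h1 h2 h3 h4
  show chH E (a+1) b + chV E (a+1) (b-1) = chH E a (b+1) + chV E a (b+1-1)
  rw [show b+1-1 = b by ring]
  have comb : ∀ t1 t2 t3 t4 t6 t7 : ZMod 2,
      t1+t2+t3+t4 = 0 → t1+t7+t4+t6 = 0 → t2+t3 = t6+t7 := by decide
  exact comb _ _ _ _ _ _ hV hC

lemma Wstep {n : ℤ} {E : Set Edge} (hE : TotallyEven n n E) {a b : ℤ}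
    (h1 : 1 ≤ a) (h2 : a + 1 ≤ n) (h3 : 1 ≤ b) (h4 : b + 1 ≤ n) :
    Wf E a b = Wf E (a+1) (b+1) := by
  have hV := vertexRel hE a b
  have hC := cellRel hE h1 h2 h3 h4
  show chH E (a-1) b + chV E a (b-1) = chH E (a+1-1) (b+1) + chV E (a+1) (b+1-1)
  rw [show a+1-1 = a by ring, show b+1-1 = b by ring]
  have comb : ∀ s1 s2 s3 s4 s5 s6 : ZMod 2,
      s1+s2+s3+s4 = 0 → s2+s4+s5+s6 = 0 → s1+s3 = s6+s5 := by decide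
  exact comb _ _ _ _ _ _ hV hC

lemma TU {n : ℤ} {E : Set Edge} (hE : TotallyEven n n E) (a b : ℤ) :
    Uf E a b = chH E (a-1) b + chV E a b := by
  have hV := vertexRel hE a b
  show chH E a b + chV E a (b-1) = chH E (a-1) b + chV E a b
  have comb : ∀ s1 s2 s3 s4 : ZMod 2, s1+s2+s3+s4 = 0 → s2+s3 = s1+s4 := by decide
  exact comb _ _ _ _ hV

lemma Uconst {n : ℤ} {E : Set Edge} (hE : TotallyEven n n E) :
    ∀ (k : ℕ) (a b : ℤ), 1 ≤ a → 1 ≤ b - (k:ℤ) → b ≤ n → a + (k:ℤ) ≤ n →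
      Uf E a b = Uf E (a + (k:ℤ)) (b - (k:ℤ)) := by
  intro k
  induction k with
  | zero => intro a b _ _ _ _; simp
  | succ k ih =>
    intro a b h1 h2 h3 h4
    push_cast at h2 h4 ⊢
    have e1 : Uf E (a+1) (b-1) = Uf E a b := by
      have := Ustep hE (a := a) (b := b-1) h1 (by omega) (by omega) (by omega)
      rwa [show b-1+1 = b by ring] at this
    have e2 := ih (a+1) (b-1) (by omega) (by push_cast; omega) (by omega) (by push_cast; omega)
    calc Uf E a b = Uf E (a+1) (b-1) := e1.symm
      _ = Uf E (a+1+(k:ℤ)) (b-1-(k:ℤ)) := e2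
      _ = Uf E (a+((k:ℤ)+1)) (b-((k:ℤ)+1)) := by
          rw [show a+1+(k:ℤ) = a+((k:ℤ)+1) by ring, show b-1-(k:ℤ) = b-((k:ℤ)+1) by ring]

lemma Wconst {n : ℤ} {E : Set Edge} (hE : TotallyEven n n E) :
    ∀ (k : ℕ) (a b : ℤ), 1 ≤ a → 1 ≤ b → a + (k:ℤ) ≤ n → b + (k:ℤ) ≤ n →
      Wf E a b = Wf E (a + (k:ℤ)) (b + (k:ℤ)) := by
  intro k
  induction k with
  | zero => intro a b _ _ _ _; simp
  | succ k ih =>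
    intro a b h1 h2 h3 h4
    push_cast at h3 h4 ⊢
    have e1 : Wf E a b = Wf E (a+1) (b+1) :=
      Wstep hE h1 (by omega) h2 (by omega)
    have e2 := ih (a+1) (b+1) (by omega) (by omega) (by push_cast; omega) (by push_cast; omega)
    calc Wf E a b = Wf E (a+1) (b+1) := e1
      _ = Wf E (a+1+(k:ℤ)) (b+1+(k:ℤ)) := e2
      _ = Wf E (a+((k:ℤ)+1)) (b+((k:ℤ)+1)) := by
          rw [show a+1+(k:ℤ) = a+((k:ℤ)+1) by ring, show b+1+(k:ℤ) = b+((k:ℤ)+1) by ring]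

lemma Usymm_le {n : ℤ} {E : Set Edge} (hE : TotallyEven n n E) {a b : ℤ}
    (h1 : 1 ≤ a) (hab : a ≤ b) (h4 : b ≤ n) : Uf E a b = Uf E b a := by
  have hk : ((b - a).toNat : ℤ) = b - a := Int.toNat_of_nonneg (by omega)
  have := Uconst hE (b - a).toNat a b h1 (by rw [hk]; omega) h4 (by rw [hk]; omega)
  rwa [hk, show a + (b - a) = b by ring, show b - (b - a) = a by ring] at this

lemma Usymm {n : ℤ} {E : Set Edge} (hE : TotallyEven n n E) {a b : ℤ}
    (h1 : 1 ≤ a) (h2 : a ≤ n) (h3 : 1 ≤ b) (h4 : b ≤ n) : Uf E a b = Uf E b a := by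
  rcases le_total a b with h | h
  · exact Usymm_le hE h1 h h4
  · exact (Usymm_le hE h3 h h2).symm

lemma boundarySwap {n : ℤ} {E : Set Edge} (hE : TotallyEven n n E) {d : ℤ}
    (h1 : 1 ≤ d) (h2 : d + 1 ≤ n) : chH E d 1 = chV E 1 d := by
  have u1 : Uf E d 1 = chH E d 1 := by
    show chH E d 1 + chV E d (1-1) = chH E d 1
    rw [chV_zero hE (x := d) (y := 1-1) (by omega), add_zero]
  have u2 : Uf E 1 d = chV E 1 d := by
    rw [TU hE 1 d, chH_zero hE (by omega : (1:ℤ)-1 < 1 ∨ _ ∨ _ ∨ _), zero_add]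
  rw [← u1, ← u2]
  exact Usymm hE h1 (by omega) (by omega) (by omega)

lemma Wsymm_le {n : ℤ} {E : Set Edge} (hE : TotallyEven n n E) {a b : ℤ}
    (h1 : 1 ≤ b) (hab : b ≤ a) (h4 : a ≤ n) : Wf E a b = Wf E b a := by
  rcases eq_or_lt_of_le hab with rfl | hlt
  · rfl
  · have hk : ((b - 1).toNat : ℤ) = b - 1 := Int.toNat_of_nonneg (by omega)
    have w1 := Wconst hE (b-1).toNat (a-b+1) 1 (by omega) le_rfl
      (by rw [hk]; omega) (by rw [hk]; omega)
    rw [hk, show a-b+1+(b-1) = a by ring, show 1+(b-1) = b by ring] at w1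
    have w2 := Wconst hE (b-1).toNat 1 (a-b+1) le_rfl (by omega)
      (by rw [hk]; omega) (by rw [hk]; omega)
    rw [hk, show 1+(b-1) = b by ring, show a-b+1+(b-1) = a by ring] at w2
    have w3 : Wf E (a-b+1) 1 = chH E (a-b) 1 := by
      show chH E (a-b+1-1) 1 + chV E (a-b+1) (1-1) = chH E (a-b) 1
      rw [show a-b+1-1 = a-b by ring,
        chV_zero hE (x := a-b+1) (y := 1-1) (by omega), add_zero]
    have w4 : Wf E 1 (a-b+1) = chV E 1 (a-b) := by
      show chH E (1-1) (a-b+1) + chV E 1 (a-b+1-1) = chV E 1 (a-b)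
      rw [show a-b+1-1 = a-b by ring,
        chH_zero hE (x := 1-1) (y := a-b+1) (by omega), zero_add]
    rw [← w1, ← w2, w3, w4]
    exact boundarySwap hE (by omega) (by omega)

lemma Wsymm {n : ℤ} {E : Set Edge} (hE : TotallyEven n n E) {a b : ℤ}
    (h1 : 1 ≤ a) (h2 : a ≤ n) (h3 : 1 ≤ b) (h4 : b ≤ n) : Wf E a b = Wf E b a := by
  rcases le_total b a with h | h
  · exact Wsymm_le hE h3 h h2
  · exact (Wsymm_le hE h1 h h4).symm

lemma Wtau_le {n : ℤ} {E : Set Edge} (hE : TotallyEven n n E) {a b : ℤ}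
    (h1 : 1 ≤ a) (h3 : 1 ≤ b) (hab : a + b ≤ n + 1) :
    Wf E a b = Wf E (n+1-b) (n+1-a) := by
  have hk : (((n+1-a-b).toNat : ℤ)) = n+1-a-b := Int.toNat_of_nonneg (by omega)
  have := Wconst hE (n+1-a-b).toNat a b h1 h3 (by rw [hk]; omega) (by rw [hk]; omega)
  rwa [hk, show a + (n+1-a-b) = n+1-b by ring, show b + (n+1-a-b) = n+1-a by ring] at this

lemma Wtau {n : ℤ} {E : Set Edge} (hE : TotallyEven n n E) {a b : ℤ}
    (h1 : 1 ≤ a) (h2 : a ≤ n) (h3 : 1 ≤ b) (h4 : b ≤ n) :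
    Wf E a b = Wf E (n+1-b) (n+1-a) := by
  rcases le_or_gt (a+b) (n+1) with h | h
  · exact Wtau_le hE h1 h3 h
  · have := Wtau_le hE (a := n+1-b) (b := n+1-a) (by omega) (by omega) (by omega)
    rw [show n+1-(n+1-a) = a by ring, show n+1-(n+1-b) = b by ring] at this
    exact this.symm

lemma Utau_le {n : ℤ} {E : Set Edge} (hE : TotallyEven n n E) {a b : ℤ}
    (h1 : 1 ≤ a) (h2 : a ≤ n) (h3 : 1 ≤ b) (h4 : b ≤ n) (hab : a + b ≤ n) :
    Uf E a b = Uf E (n+1-b) (n+1-a) := by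
  have hk : (((b-1).toNat : ℤ)) = b - 1 := Int.toNat_of_nonneg (by omega)
  -- telescope the left side to the bottom boundary
  have s1 := Uconst hE (b-1).toNat a b h1 (by rw [hk]; omega) h4 (by rw [hk]; omega)
  rw [hk, show b - (b-1) = 1 by ring] at s1
  have s2 : Uf E (a+(b-1)) 1 = chH E (a+(b-1)) 1 := by
    show chH E (a+(b-1)) 1 + chV E (a+(b-1)) (1-1) = chH E (a+(b-1)) 1
    rw [chV_zero hE (x := a+(b-1)) (y := 1-1) (by omega), add_zero]
  have s3 : chH E (a+(b-1)) 1 = Wf E (a+b) 1 := by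
    show chH E (a+(b-1)) 1 = chH E (a+b-1) 1 + chV E (a+b) (1-1)
    rw [show a+b-1 = a+(b-1) by ring,
      chV_zero hE (x := a+b) (y := 1-1) (by omega), add_zero]
  have s4 : Wf E (a+b) 1 = Wf E n (n+1-(a+b)) := by
    have := Wtau hE (a := a+b) (b := 1) (by omega) (by omega) le_rfl (by omega)
    rwa [show n+1-1 = n by ring] at this
  have s5 : Wf E n (n+1-(a+b)) = chV E n (n+1-(a+b)) := by
    have hv := vertexRel hE n (n+1-(a+b))
    rw [chH_zero hE (x := n) (y := n+1-(a+b)) (by omega)] at hv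
    show chH E (n-1) (n+1-(a+b)) + chV E n (n+1-(a+b)-1) = chV E n (n+1-(a+b))
    have comb : ∀ s1 s3 s4 : ZMod 2, s1 + 0 + s3 + s4 = 0 → s1 + s3 = s4 := by decide
    exact comb _ _ _ hv
  -- telescope the right side to the right boundary
  have t1 := Uconst hE (b-1).toNat (n+1-b) (n+1-a) (by omega)
    (by rw [hk]; omega) (by omega) (by rw [hk]; omega)
  rw [hk, show n+1-b+(b-1) = n by ring, show n+1-a-(b-1) = n+2-(a+b) by ring] at t1
  have t2 : Uf E n (n+2-(a+b)) = chV E n (n+1-(a+b)) := by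
    show chH E n (n+2-(a+b)) + chV E n (n+2-(a+b)-1) = chV E n (n+1-(a+b))
    rw [show n+2-(a+b)-1 = n+1-(a+b) by ring,
      chH_zero hE (by omega : n < 1 ∨ n ≤ n ∨ _ ∨ _), zero_add]
  rw [s1, s2, s3, s4, s5, t1, t2]

lemma Utau {n : ℤ} {E : Set Edge} (hE : TotallyEven n n E) {a b : ℤ}
    (h1 : 1 ≤ a) (h2 : a ≤ n) (h3 : 1 ≤ b) (h4 : b ≤ n) :
    Uf E a b = Uf E (n+1-b) (n+1-a) := by
  rcases lt_trichotomy (a+b) (n+1) with h | h | h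
  · exact Utau_le hE h1 h2 h3 h4 (by omega)
  · rw [show n+1-b = a by omega, show n+1-a = b by omega]
  · have := Utau_le hE (a := n+1-b) (b := n+1-a) (by omega) (by omega) (by omega)
      (by omega) (by omega)
    rw [show n+1-(n+1-a) = a by ring, show n+1-(n+1-b) = b by ring] at this
    exact this.symm

lemma Dsigma {n : ℤ} {E : Set Edge} (hE : TotallyEven n n E) :
    ∀ x : ℤ, 0 ≤ x → x ≤ n → ∀ y : ℤ, 1 ≤ y → y ≤ n → chH E x y = chV E y x := by
  refine fun x hx => Int.le_induction
    (motive := fun x _ => x ≤ n → ∀ y : ℤ, 1 ≤ y → y ≤ n → chH E x y = chV E y x) ?_ ?_ x hx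
  · intro _ y hy1 hy2
    rw [chH_zero hE (x := 0) (y := y) (by omega),
      chV_zero hE (x := y) (y := 0) (by omega)]
  · intro x hx ih hxn y hy1 hy2
    have ih' := ih (by omega) y hy1 hy2
    have hU := Usymm hE (a := x+1) (b := y) (by omega) hxn hy1 hy2
    have hW := Wsymm hE (a := x+1) (b := y) (by omega) hxn hy1 hy2
    unfold Uf at hU
    unfold Wf at hW
    rw [show x+1-1 = x by ring] at hU hW
    have hv := vertexRel hE y (x+1)
    rw [show x+1-1 = x by ring] at hv
    have comb : ∀ A B P C D Q G : ZMod 2,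
        A+P = C+Q → B+P = D+Q → D+C+Q+G = 0 → B = Q → A = G := by decide
    exact comb _ _ _ _ _ _ _ hU hW hv ih'

lemma Dtau {n : ℤ} {E : Set Edge} (hE : TotallyEven n n E) :
    ∀ x : ℤ, 0 ≤ x → x ≤ n → ∀ y : ℤ, 1 ≤ y → y ≤ n →
      chH E x y = chV E (n+1-y) (n-x) := by
  refine fun x hx => Int.le_induction
    (motive := fun x _ => x ≤ n → ∀ y : ℤ, 1 ≤ y → y ≤ n → chH E x y = chV E (n+1-y) (n-x)) ?_ ?_ x hx
  · intro _ y hy1 hy2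
    rw [chH_zero hE (x := 0) (y := y) (by omega), show n - (0:ℤ) = n by ring,
      chV_zero hE (x := n+1-y) (y := n) (by omega)]
  · intro x hx ih hxn y hy1 hy2
    have ih' := ih (by omega) y hy1 hy2
    have hU := Utau hE (a := x+1) (b := y) (by omega) hxn hy1 hy2
    have hW := Wtau hE (a := x+1) (b := y) (by omega) hxn hy1 hy2
    rw [show n+1-(x+1) = n-x by ring] at hU hW
    unfold Uf at hU
    unfold Wf at hW
    rw [show x+1-1 = x by ring] at hW
    have hv := vertexRel hE (n+1-y) (n-x)
    rw [show n-(x+1) = n-x-1 by ring]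
    have comb : ∀ A B P C D G F : ZMod 2,
        A+P = C+G → B+P = D+G → D+C+G+F = 0 → B = F → A = G := by decide
    exact comb _ _ _ _ _ _ _ hU hW hv ih'

lemma sigmaPart {n : ℤ} {E : Set Edge} (hE : TotallyEven n n E) :
    ∀ e ∈ E, Sym2.map (fun p : V => (p.2, p.1)) e ∈ E := by
  intro e he
  obtain ⟨p, q, hpq, hp, hq, hoff⟩ := hE.1 e he
  obtain ⟨p1, p2⟩ := p
  obtain ⟨q1, q2⟩ := q
  simp only at hoff
  subst hpq
  rw [Sym2.map_pair_eq]
  rcases hoff with ⟨h1, h2⟩ | ⟨h1, h2⟩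
  · subst h1; subst h2
    have hb := memBoundsH hE (x := p1) (y := q2) he
    have hkey : chV E q2 p1 = 1 := by
      rw [← Dsigma hE p1 (by omega) (by omega) q2 (by omega) (by omega)]
      exact ind_of_mem he
    exact mem_of_ind hkey
  · subst h1; subst h2
    have hb := memBoundsV hE (x := q1) (y := p2) he
    have hkey : chH E p2 q1 = 1 := by
      rw [Dsigma hE p2 (by omega) (by omega) q1 (by omega) (by omega)]
      exact ind_of_mem he
    exact mem_of_ind hkey

lemma tauPart {n : ℤ} {E : Set Edge} (hE : TotallyEven n n E) :
    ∀ e ∈ E, Sym2.map (fun p : V => (n + 1 - p.2, n + 1 - p.1)) e ∈ E := by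
  intro e he
  obtain ⟨p, q, hpq, hp, hq, hoff⟩ := hE.1 e he
  obtain ⟨p1, p2⟩ := p
  obtain ⟨q1, q2⟩ := q
  simp only at hoff
  subst hpq
  rw [Sym2.map_pair_eq]
  rcases hoff with ⟨h1, h2⟩ | ⟨h1, h2⟩
  · subst h1; subst h2
    have hb := memBoundsH hE (x := p1) (y := q2) he
    have hkey : chV E (n+1-q2) (n-p1) = 1 := by
      rw [← Dtau hE p1 (by omega) (by omega) q2 (by omega) (by omega)]
      exact ind_of_mem he
    have hmem := mem_of_ind hkey
    show s(((n+1-q2 : ℤ), (n+1-p1 : ℤ)), ((n+1-q2 : ℤ), (n+1-(p1+1) : ℤ))) ∈ E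
    rw [show (n+1-(p1+1) : ℤ) = n-p1 by ring, show (n+1-p1 : ℤ) = n-p1+1 by ring,
      Sym2.eq_swap]
    exact hmem
  · subst h1; subst h2
    have hb := memBoundsV hE (x := q1) (y := p2) he
    have hkey : chH E (n-p2) (n+1-q1) = 1 := by
      have hd := Dtau hE (n-p2) (by omega) (by omega) (n+1-q1) (by omega) (by omega)
      rw [show n+1-(n+1-q1) = q1 by ring, show n-(n-p2) = p2 by ring] at hd
      rw [hd]
      exact ind_of_mem he
    have hmem := mem_of_ind hkey
    show s(((n+1-p2 : ℤ), (n+1-q1 : ℤ)), ((n+1-(p2+1) : ℤ), (n+1-q1 : ℤ))) ∈ E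
    rw [show (n+1-(p2+1) : ℤ) = n-p2 by ring, show (n+1-p2 : ℤ) = n-p2+1 by ring,
      Sym2.eq_swap]
    exact hmem

end Aux


theorem stmt3 (n : ℤ) (E : Set Edge) (hE : TotallyEven n n E) :
    (∀ e : Edge, e ∈ E ↔ Sym2.map (fun p : V => (n + 1 - p.1, n + 1 - p.2)) e ∈ E) ∧
    (∀ e : Edge, e ∈ E ↔ Sym2.map (fun p : V => (p.2, p.1)) e ∈ E) ∧
    (∀ e : Edge, e ∈ E ↔ Sym2.map (fun p : V => (n + 1 - p.2, n + 1 - p.1)) e ∈ E) := by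
  have hσ : ∀ e : Edge, e ∈ E ↔ Sym2.map (fun p : V => (p.2, p.1)) e ∈ E := by
    intro e
    constructor
    · exact fun h => sigmaPart hE e h
    · intro h
      have h2 := sigmaPart hE _ h
      rw [Sym2.map_map] at h2
      have hcomp : ((fun p : V => (p.2, p.1)) ∘ (fun p : V => (p.2, p.1))) = id := rfl
      rwa [hcomp, Sym2.map_id] at h2
  have hτ : ∀ e : Edge, e ∈ E ↔
      Sym2.map (fun p : V => (n + 1 - p.2, n + 1 - p.1)) e ∈ E := by
    intro e
    constructor
    · exact fun h => tauPart hE e h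
    · intro h
      have h2 := tauPart hE _ h
      rw [Sym2.map_map] at h2
      have hcomp : ((fun p : V => ((n+1-p.2 : ℤ), (n+1-p.1 : ℤ))) ∘
          (fun p : V => ((n+1-p.2 : ℤ), (n+1-p.1 : ℤ)))) = id := by
        funext p
        obtain ⟨a, b⟩ := p
        simp only [Function.comp_apply, id_eq, Prod.mk.injEq]
        constructor <;> ring
      rwa [hcomp, Sym2.map_id] at h2
  refine ⟨?_, hσ, hτ⟩
  intro e
  rw [hσ e, hτ (Sym2.map (fun p : V => (p.2, p.1)) e), Sym2.map_map]
  exact Iff.rfl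


end Slitherlink
end

section
/- The cardinality of any totally even edge set of the n × n grid is of the form 4uv for some nonnegative integers u, v with u + v = n. Conversely, for every pair of nonnegative integers u, v with u + v = n there exists a totally even edge set of the n × n grid of cardinality exactly 4uv. -/
namespace Slitherlink

section Aux
open Finset

/-- Horizontal unit edge with left endpoint `(x, y)`. -/
def eH (x y : ℤ) : Edge := s(((x, y) : V), ((x + 1, y) : V))

/-- Vertical unit edge with bottom endpoint `(x, y)`. -/
def eV (x y : ℤ) : Edge := s(((x, y) : V), ((x, y + 1) : V))

/-- Sum of all four coordinates of the (unordered) endpoints. -/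
def sg : Edge → ℤ := Sym2.lift ⟨fun p q => p.1 + p.2 + q.1 + q.2, by intros; ring⟩

/-- Sum of the coordinate differences of the endpoints. -/
def dl : Edge → ℤ := Sym2.lift ⟨fun p q => (p.1 - p.2) + (q.1 - q.2), by intros; ring⟩

@[simp] lemma sg_mk (p q : V) : sg s(p, q) = p.1 + p.2 + q.1 + q.2 := rfl
@[simp] lemma dl_mk (p q : V) : dl s(p, q) = (p.1 - p.2) + (q.1 - q.2) := rfl

@[simp] lemma sg_eH (x y : ℤ) : sg (eH x y) = 2 * (x + y) + 1 := by
  simp [eH]; ring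
@[simp] lemma sg_eV (x y : ℤ) : sg (eV x y) = 2 * (x + y) + 1 := by
  simp [eV]; ring
@[simp] lemma dl_eH (x y : ℤ) : dl (eH x y) = 2 * (x - y) + 1 := by
  simp [eH]; ring
@[simp] lemma dl_eV (x y : ℤ) : dl (eV x y) = 2 * (x - y) - 1 := by
  simp [eV]; ring

lemma eH_eq_eH {x y a b : ℤ} : eH x y = eH a b ↔ (x = a ∧ y = b) := by
  rw [eH, eH, Sym2.eq_iff]
  simp only [Prod.mk.injEq]
  omega

lemma eV_eq_eV {x y a b : ℤ} : eV x y = eV a b ↔ (x = a ∧ y = b) := by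
  rw [eV, eV, Sym2.eq_iff]
  simp only [Prod.mk.injEq]
  omega

lemma eH_ne_eV (x y a b : ℤ) : eH x y ≠ eV a b := by
  rw [eH, eV, Ne, Sym2.eq_iff]
  simp only [Prod.mk.injEq]
  omega

variable (n : ℤ)

lemma gridEdge_iff {e : Edge} : gridEdge n n e ↔
    (∃ x y, 1 ≤ x ∧ x + 1 ≤ n ∧ 1 ≤ y ∧ y ≤ n ∧ e = eH x y) ∨
    (∃ x y, 1 ≤ x ∧ x ≤ n ∧ 1 ≤ y ∧ y + 1 ≤ n ∧ e = eV x y) := by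
  constructor
  · rintro ⟨⟨px, py⟩, ⟨qx, qy⟩, rfl, hp, hq, (⟨h1, h2⟩ | ⟨h1, h2⟩)⟩
    · obtain ⟨hp1, hp2, hp3, hp4⟩ := hp
      obtain ⟨hq1, hq2, hq3, hq4⟩ := hq
      simp only at h1 h2 hp1 hp2 hp3 hp4 hq1 hq2 hq3 hq4
      refine Or.inl ⟨px, py, hp1, by omega, hp3, hp4, ?_⟩
      rw [h1, h2]; rfl
    · obtain ⟨hp1, hp2, hp3, hp4⟩ := hp
      obtain ⟨hq1, hq2, hq3, hq4⟩ := hq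
      simp only at h1 h2 hp1 hp2 hp3 hp4 hq1 hq2 hq3 hq4
      refine Or.inr ⟨px, py, hp1, hp2, hp3, by omega, ?_⟩
      rw [h1, h2]; rfl
  · rintro (⟨x, y, h1, h2, h3, h4, rfl⟩ | ⟨x, y, h1, h2, h3, h4, rfl⟩)
    · exact ⟨(x, y), (x + 1, y), rfl, ⟨h1, by omega, h3, h4⟩, ⟨by omega, by omega, h3, h4⟩,
        Or.inl ⟨rfl, rfl⟩⟩
    · exact ⟨(x, y), (x, y + 1), rfl, ⟨h1, h2, h3, by omega⟩, ⟨h1, h2, by omega, by omega⟩,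
        Or.inr ⟨rfl, rfl⟩⟩

lemma gridEdge_eH_iff {x y : ℤ} :
    gridEdge n n (eH x y) ↔ (1 ≤ x ∧ x + 1 ≤ n ∧ 1 ≤ y ∧ y ≤ n) := by
  rw [gridEdge_iff]
  constructor
  · rintro (⟨a, b, h1, h2, h3, h4, he⟩ | ⟨a, b, h1, h2, h3, h4, he⟩)
    · obtain ⟨rfl, rfl⟩ := eH_eq_eH.mp he; exact ⟨h1, h2, h3, h4⟩
    · exact absurd he (eH_ne_eV _ _ _ _)
  · rintro ⟨h1, h2, h3, h4⟩
    exact Or.inl ⟨x, y, h1, h2, h3, h4, rfl⟩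

lemma gridEdge_eV_iff {x y : ℤ} :
    gridEdge n n (eV x y) ↔ (1 ≤ x ∧ x ≤ n ∧ 1 ≤ y ∧ y + 1 ≤ n) := by
  rw [gridEdge_iff]
  constructor
  · rintro (⟨a, b, h1, h2, h3, h4, he⟩ | ⟨a, b, h1, h2, h3, h4, he⟩)
    · exact absurd he.symm (eH_ne_eV _ _ _ _)
    · obtain ⟨rfl, rfl⟩ := eV_eq_eV.mp he; exact ⟨h1, h2, h3, h4⟩
  · rintro ⟨h1, h2, h3, h4⟩
    exact Or.inr ⟨x, y, h1, h2, h3, h4, rfl⟩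

end Aux

section Aux2
open Finset

variable (n : ℤ)

lemma mem_candidates {e : Edge} {x y : ℤ} (he : gridEdge n n e) (hx : ((x, y) : V) ∈ e) :
    e = eH x y ∨ e = eH (x - 1) y ∨ e = eV x y ∨ e = eV x (y - 1) := by
  rcases (gridEdge_iff n).1 he with ⟨a, b, h1, h2, h3, h4, rfl⟩ | ⟨a, b, h1, h2, h3, h4, rfl⟩
  · rw [eH, Sym2.mem_iff] at hx
    rcases hx with h | h
    · left; rw [eH_eq_eH]
      obtain ⟨rfl, rfl⟩ : x = a ∧ y = b := by simpa [Prod.ext_iff] using h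
      exact ⟨rfl, rfl⟩
    · right; left; rw [eH_eq_eH]
      obtain ⟨h5, h6⟩ : x = a + 1 ∧ y = b := by simpa [Prod.ext_iff] using h
      omega
  · rw [eV, Sym2.mem_iff] at hx
    rcases hx with h | h
    · right; right; left; rw [eV_eq_eV]
      obtain ⟨h5, h6⟩ : x = a ∧ y = b := by simpa [Prod.ext_iff] using h
      omega
    · right; right; right; rw [eV_eq_eV]
      obtain ⟨h5, h6⟩ : x = a ∧ y = b + 1 := by simpa [Prod.ext_iff] using h
      omega

lemma endpoint_gridVertex {e : Edge} {p : V} (he : gridEdge n n e) (hp : p ∈ e) :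
    gridVertex n n p := by
  obtain ⟨a, b, rfl, ha, hb, -⟩ := he
  rw [Sym2.mem_iff] at hp
  rcases hp with rfl | rfl <;> assumption

lemma vertexSet_eq {E : Set Edge} (hE : ∀ e ∈ E, gridEdge n n e) (x y : ℤ) :
    {e ∈ E | ((x, y) : V) ∈ e} =
      E ∩ {eH x y, eH (x - 1) y, eV x y, eV x (y - 1)} := by
  ext e
  constructor
  · rintro ⟨he, hx⟩
    exact ⟨he, mem_candidates n (hE e he) hx⟩
  · rintro ⟨he, hc⟩
    refine ⟨he, ?_⟩
    rcases hc with rfl | rfl | rfl | rfl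
    · rw [eH, Sym2.mem_iff]; left; rfl
    · have hxx : x - 1 + 1 = x := by omega
      rw [eH, hxx, Sym2.mem_iff]; right; rfl
    · rw [eV, Sym2.mem_iff]; left; rfl
    · have hyy : y - 1 + 1 = y := by omega
      rw [eV, hyy, Sym2.mem_iff]; right; rfl

open Classical in
lemma ncard_inter_four (A : Set Edge) (a b c d : Edge)
    (hab : a ≠ b) (hac : a ≠ c) (had : a ≠ d) (hbc : b ≠ c) (hbd : b ≠ d) (hcd : c ≠ d) :
    (A ∩ {a, b, c, d}).ncard =
      (if a ∈ A then 1 else 0) + (if b ∈ A then 1 else 0) +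
      (if c ∈ A then 1 else 0) + (if d ∈ A then 1 else 0) := by
  classical
  have h1 : A ∩ {a, b, c, d} = ↑(({a, b, c, d} : Finset Edge).filter (· ∈ A)) := by
    ext e
    simp only [Set.mem_inter_iff, Set.mem_insert_iff, Set.mem_singleton_iff, Finset.coe_filter,
      Finset.mem_insert, Finset.mem_singleton, Set.mem_setOf_eq]
    tauto
  rw [h1, Set.ncard_coe_finset, Finset.card_filter]
  rw [show ({a, b, c, d} : Finset Edge) = insert a (insert b (insert c {d})) from rfl]
  rw [Finset.sum_insert (by simp [hab, hac, had]),
    Finset.sum_insert (by simp [hbc, hbd]),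
    Finset.sum_insert (by simp [hcd]), Finset.sum_singleton]
  ring

open Classical in
lemma degree_eq_four {E : Set Edge} (hE : ∀ e ∈ E, gridEdge n n e) (x y : ℤ) :
    degree E ((x, y) : V) =
      (if eH x y ∈ E then 1 else 0) + (if eH (x - 1) y ∈ E then 1 else 0) +
      (if eV x y ∈ E then 1 else 0) + (if eV x (y - 1) ∈ E then 1 else 0) := by
  rw [degree, vertexSet_eq n hE x y, ncard_inter_four]
  · rw [Ne, eH_eq_eH]; omega
  · exact eH_ne_eV _ _ _ _
  · exact eH_ne_eV _ _ _ _
  · exact eH_ne_eV _ _ _ _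
  · exact eH_ne_eV _ _ _ _
  · rw [Ne, eV_eq_eV]; omega

lemma cellEdges_eq (a b : ℤ) :
    cellEdges a b = {eH a b, eV a b, eV (a + 1) b, eH a (b + 1)} := rfl

open Classical in
lemma cellCount_eq (E : Set Edge) (a b : ℤ) :
    cellCount E a b =
      (if eH a b ∈ E then 1 else 0) + (if eV a b ∈ E then 1 else 0) +
      (if eV (a + 1) b ∈ E then 1 else 0) + (if eH a (b + 1) ∈ E then 1 else 0) := by
  rw [cellCount, cellEdges_eq, ncard_inter_four]
  · exact eH_ne_eV _ _ _ _
  · exact eH_ne_eV _ _ _ _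
  · rw [Ne, eH_eq_eH]; omega
  · rw [Ne, eV_eq_eV]; omega
  · exact (eH_ne_eV _ _ _ _).symm
  · exact (eH_ne_eV _ _ _ _).symm

end Aux2

section Aux3
variable (n : ℤ)

/-- Diagonal level index of an edge (distance data in the `x+y` direction). -/
def idxI (e : Edge) : ℤ := (min (sg e) (4 * n + 4 - sg e) - 1) / 2

/-- Antidiagonal index of an edge (distance from the main diagonal). -/
def idxJ (e : Edge) : ℤ := (max (dl e) (-dl e) + 1) / 2

lemma idxI_eH (x y : ℤ) : idxI n (eH x y) = min (x + y) (2 * n + 1 - (x + y)) := by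
  rw [idxI, sg_eH]; omega

lemma idxI_eV (x y : ℤ) : idxI n (eV x y) = min (x + y) (2 * n + 1 - (x + y)) := by
  rw [idxI, sg_eV]; omega

lemma idxJ_eH (x y : ℤ) : idxJ (eH x y) = max (x - y + 1) (y - x) := by
  rw [idxJ, dl_eH]; omega

lemma idxJ_eV (x y : ℤ) : idxJ (eV x y) = max (x - y) (y - x + 1) := by
  rw [idxJ, dl_eV]; omega

/-- The model totally even set attached to a Boolean function `g`. -/
def MSet (g : ℤ → Bool) : Set Edge := {e | gridEdge n n e ∧ g (idxI n e) ≠ g (idxJ e)}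

lemma totallyEven_MSet (g : ℤ → Bool) : TotallyEven n n (MSet n g) := by
  classical
  have hsub : ∀ e ∈ MSet n g, gridEdge n n e := fun e he => he.1
  refine ⟨hsub, ?_, ?_⟩
  · rintro ⟨x, y⟩
    by_cases hgv : gridVertex n n ((x, y) : V)
    · obtain ⟨hx1, hx2, hy1, hy2⟩ := hgv
      simp only at hx1 hx2 hy1 hy2
      rw [degree_eq_four n hsub x y]
      have hR : (eH x y ∈ MSet n g) ↔
          (g (min (x + y) (2 * n + 1 - (x + y))) ≠ g (max (x - y + 1) (y - x))) := by
        constructor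
        · rintro ⟨-, h⟩
          rwa [idxI_eH, idxJ_eH] at h
        · intro h
          by_cases hg : x + 1 ≤ n
          · exact ⟨(gridEdge_eH_iff n).2 ⟨hx1, hg, hy1, hy2⟩, by rwa [idxI_eH, idxJ_eH]⟩
          · exfalso
            rw [show min (x + y) (2 * n + 1 - (x + y)) = max (x - y + 1) (y - x) by omega] at h
            exact h rfl
      have hL : (eH (x - 1) y ∈ MSet n g) ↔
          (g (min (x + y - 1) (2 * n + 2 - (x + y))) ≠ g (max (x - y) (y - x + 1))) := by
        have e1 : idxI n (eH (x - 1) y) = min (x + y - 1) (2 * n + 2 - (x + y)) := by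
          rw [idxI_eH]; omega
        have e2 : idxJ (eH (x - 1) y) = max (x - y) (y - x + 1) := by
          rw [idxJ_eH]; omega
        constructor
        · rintro ⟨-, h⟩; rwa [e1, e2] at h
        · intro h
          by_cases hg : 1 ≤ x - 1
          · exact ⟨(gridEdge_eH_iff n).2 ⟨hg, by omega, hy1, hy2⟩, by rwa [e1, e2]⟩
          · exfalso
            rw [show min (x + y - 1) (2 * n + 2 - (x + y)) = max (x - y) (y - x + 1) by omega] at h
            exact h rfl
      have hU : (eV x y ∈ MSet n g) ↔
          (g (min (x + y) (2 * n + 1 - (x + y))) ≠ g (max (x - y) (y - x + 1))) := by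
        constructor
        · rintro ⟨-, h⟩; rwa [idxI_eV, idxJ_eV] at h
        · intro h
          by_cases hg : y + 1 ≤ n
          · exact ⟨(gridEdge_eV_iff n).2 ⟨hx1, hx2, hy1, hg⟩, by rwa [idxI_eV, idxJ_eV]⟩
          · exfalso
            rw [show min (x + y) (2 * n + 1 - (x + y)) = max (x - y) (y - x + 1) by omega] at h
            exact h rfl
      have hD : (eV x (y - 1) ∈ MSet n g) ↔
          (g (min (x + y - 1) (2 * n + 2 - (x + y))) ≠ g (max (x - y + 1) (y - x))) := by
        have e1 : idxI n (eV x (y - 1)) = min (x + y - 1) (2 * n + 2 - (x + y)) := by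
          rw [idxI_eV]; omega
        have e2 : idxJ (eV x (y - 1)) = max (x - y + 1) (y - x) := by
          rw [idxJ_eV]; omega
        constructor
        · rintro ⟨-, h⟩; rwa [e1, e2] at h
        · intro h
          by_cases hg : 1 ≤ y - 1
          · exact ⟨(gridEdge_eV_iff n).2 ⟨hx1, hx2, hg, by omega⟩, by rwa [e1, e2]⟩
          · exfalso
            rw [show min (x + y - 1) (2 * n + 2 - (x + y)) = max (x - y + 1) (y - x) by omega] at h
            exact h rfl
      simp only [hR, hL, hU, hD]
      rcases Bool.dichotomy (g (min (x + y) (2 * n + 1 - (x + y)))) with ha | ha <;>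
      rcases Bool.dichotomy (g (min (x + y - 1) (2 * n + 2 - (x + y)))) with hb | hb <;>
      rcases Bool.dichotomy (g (max (x - y + 1) (y - x))) with hc | hc <;>
      rcases Bool.dichotomy (g (max (x - y) (y - x + 1))) with hd | hd <;>
      simp [ha, hb, hc, hd] <;> decide
    · have hempty : {e ∈ MSet n g | ((x, y) : V) ∈ e} = ∅ := by
        ext e
        simp only [Set.mem_setOf_eq, Set.mem_empty_iff_false, iff_false, not_and]
        intro he hx
        exact hgv (endpoint_gridVertex n (hsub e he) hx)
      rw [degree, hempty, Set.ncard_empty]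
      exact Even.zero
  · intro a b hcell
    obtain ⟨ha1, ha2, hb1, hb2⟩ := hcell
    rw [cellCount_eq]
    have g1 : gridEdge n n (eH a b) := (gridEdge_eH_iff n).2 ⟨ha1, ha2, hb1, by omega⟩
    have g2 : gridEdge n n (eV a b) := (gridEdge_eV_iff n).2 ⟨ha1, by omega, hb1, hb2⟩
    have g3 : gridEdge n n (eV (a + 1) b) := (gridEdge_eV_iff n).2 ⟨by omega, ha2, hb1, hb2⟩
    have g4 : gridEdge n n (eH a (b + 1)) := (gridEdge_eH_iff n).2 ⟨ha1, ha2, by omega, hb2⟩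
    have m1 : (eH a b ∈ MSet n g) ↔ (g (idxI n (eH a b)) ≠ g (idxJ (eH a b))) :=
      ⟨fun h => h.2, fun h => ⟨g1, h⟩⟩
    have m2 : (eV a b ∈ MSet n g) ↔ (g (idxI n (eV a b)) ≠ g (idxJ (eV a b))) :=
      ⟨fun h => h.2, fun h => ⟨g2, h⟩⟩
    have m3 : (eV (a + 1) b ∈ MSet n g) ↔
        (g (idxI n (eV (a + 1) b)) ≠ g (idxJ (eV (a + 1) b))) :=
      ⟨fun h => h.2, fun h => ⟨g3, h⟩⟩
    have m4 : (eH a (b + 1) ∈ MSet n g) ↔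
        (g (idxI n (eH a (b + 1))) ≠ g (idxJ (eH a (b + 1)))) :=
      ⟨fun h => h.2, fun h => ⟨g4, h⟩⟩
    simp only [m1, m2, m3, m4]
    have i12 : idxI n (eV a b) = idxI n (eH a b) := by rw [idxI_eH, idxI_eV]
    have i34 : idxI n (eH a (b + 1)) = idxI n (eV (a + 1) b) := by
      rw [idxI_eH, idxI_eV]; omega
    have j14 : idxJ (eH a (b + 1)) = idxJ (eV a b) := by
      rw [idxJ_eH, idxJ_eV]; omega
    have j23 : idxJ (eV (a + 1) b) = idxJ (eH a b) := by
      rw [idxJ_eH, idxJ_eV]; omega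
    rw [i12, i34, j14, j23]
    rcases Bool.dichotomy (g (idxI n (eH a b))) with ha | ha <;>
    rcases Bool.dichotomy (g (idxI n (eV (a + 1) b))) with hb | hb <;>
    rcases Bool.dichotomy (g (idxJ (eH a b))) with hc | hc <;>
    rcases Bool.dichotomy (g (idxJ (eV a b))) with hd | hd <;>
    simp [ha, hb, hc, hd] <;> decide

end Aux3

section Aux4
variable (n : ℤ)

lemma finite_of_gridEdges {E : Set Edge} (hE : ∀ e ∈ E, gridEdge n n e) : E.Finite := by
  have h1 : E ⊆ ((fun q : ℤ × ℤ => eH q.1 q.2) '' (Set.Icc 1 n ×ˢ Set.Icc 1 n)) ∪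
      ((fun q : ℤ × ℤ => eV q.1 q.2) '' (Set.Icc 1 n ×ˢ Set.Icc 1 n)) := by
    intro e he
    rcases (gridEdge_iff n).1 (hE e he) with ⟨x, y, h1, h2, h3, h4, rfl⟩ |
      ⟨x, y, h1, h2, h3, h4, rfl⟩
    · exact Or.inl ⟨(x, y), ⟨⟨h1, by omega⟩, ⟨h3, h4⟩⟩, rfl⟩
    · exact Or.inr ⟨(x, y), ⟨⟨h1, h2⟩, ⟨h3, by omega⟩⟩, rfl⟩
  exact Set.Finite.subset (Set.Finite.union
    (Set.Finite.image _ ((Set.finite_Icc _ _).prod (Set.finite_Icc _ _)))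
    (Set.Finite.image _ ((Set.finite_Icc _ _).prod (Set.finite_Icc _ _)))) h1

lemma even_ncard_sdiff {X Y : Set Edge} (hX : X.Finite) (hY : Y.Finite)
    (h1 : Even X.ncard) (h2 : Even Y.ncard) : Even (sdiff X Y).ncard := by
  have hxy : sdiff X Y = (X ∪ Y) \ (X ∩ Y) := by
    ext e; rw [sdiff]; simp only [Set.mem_union, Set.mem_diff, Set.mem_inter_iff]; tauto
  have hsub : X ∩ Y ⊆ X ∪ Y := fun e he => Or.inl he.1
  rw [hxy, Set.ncard_diff hsub (hX.inter_of_left _)]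
  have h3 := Set.ncard_union_add_ncard_inter X Y hX hY
  have h4 : (X ∩ Y).ncard ≤ (X ∪ Y).ncard := Set.ncard_le_ncard hsub (hX.union hY)
  rw [Nat.even_iff] at h1 h2 ⊢
  omega

lemma totallyEven_sdiff {E F : Set Edge} (hE : TotallyEven n n E) (hF : TotallyEven n n F) :
    TotallyEven n n (sdiff E F) := by
  obtain ⟨hE1, hE2, hE3⟩ := hE
  obtain ⟨hF1, hF2, hF3⟩ := hF
  have hEfin := finite_of_gridEdges n hE1
  have hFfin := finite_of_gridEdges n hF1
  refine ⟨?_, ?_, ?_⟩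
  · rintro e (⟨h, -⟩ | ⟨h, -⟩)
    exacts [hE1 e h, hF1 e h]
  · intro p
    have hdec : {e ∈ sdiff E F | p ∈ e} = sdiff {e ∈ E | p ∈ e} {e ∈ F | p ∈ e} := by
      ext e
      rw [sdiff, sdiff]
      simp only [Set.mem_setOf_eq, Set.mem_union, Set.mem_diff, Set.mem_setOf_eq]
      tauto
    rw [degree, hdec]
    exact even_ncard_sdiff (hEfin.subset (fun e he => he.1)) (hFfin.subset (fun e he => he.1))
      (hE2 p) (hF2 p)
  · intro a b hc
    have hdec : sdiff E F ∩ cellEdges a b = sdiff (E ∩ cellEdges a b) (F ∩ cellEdges a b) := by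
      ext e
      rw [sdiff, sdiff]
      simp only [Set.mem_inter_iff, Set.mem_union, Set.mem_diff]
      tauto
    rw [cellCount, hdec]
    exact even_ncard_sdiff (hEfin.inter_of_left _) (hFfin.inter_of_left _)
      (hE3 a b hc) (hF3 a b hc)

lemma sdiff_eq_empty {E F : Set Edge} (h : sdiff E F = ∅) : E = F := by
  ext e
  have h1 : e ∉ sdiff E F := by rw [h]; exact id
  rw [sdiff] at h1
  simp only [Set.mem_union, Set.mem_diff, not_or, not_and, not_not] at h1
  exact ⟨h1.1, h1.2⟩

/-- Rigidity: a totally even set containing no bottom-row horizontal edge is empty. -/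
lemma rigidity {E : Set Edge} (hTE : TotallyEven n n E)
    (hbot : ∀ x : ℤ, eH x 1 ∉ E) : E = ∅ := by
  classical
  obtain ⟨hgrid, hdeg, hcell⟩ := hTE
  have hnot : ∀ e : Edge, ¬gridEdge n n e → e ∉ E := fun e h he => h (hgrid e he)
  have main : ∀ t : ℕ, ∀ x : ℤ, eH x (1 + (t : ℤ)) ∉ E ∧ eV x (t : ℤ) ∉ E := by
    intro t
    induction t with
    | zero =>
      intro x
      refine ⟨by simpa using hbot x, ?_⟩
      intro hmem
      obtain ⟨-, -, h3, -⟩ := (gridEdge_eV_iff n).1 (hgrid _ hmem)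
      norm_num at h3
    | succ t ih =>
      -- current row y = 1 + t
      set y : ℤ := 1 + (t : ℤ) with hy
      have hVrow : ∀ x : ℤ, eV x y ∉ E := by
        intro x
        by_cases hg : gridEdge n n (eV x y)
        · obtain ⟨hx1, hx2, hy1, hy2⟩ := (gridEdge_eV_iff n).1 hg
          have h := hdeg ((x, y) : V)
          rw [degree_eq_four n hgrid x y] at h
          rw [if_neg ((ih x).1), if_neg ((ih (x - 1)).1),
            if_neg (show eV x (y - 1) ∉ E by
              have : y - 1 = (t : ℤ) := by omega
              rw [this]; exact (ih x).2)] at h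
          simp only [zero_add, add_zero] at h
          by_contra hmem
          rw [if_pos hmem] at h
          exact (Nat.not_even_iff_odd.2 odd_one) h
        · exact hnot _ hg
      intro x
      constructor
      · -- horizontal edges in row 1 + (t+1) = y + 1
        by_cases hg : gridEdge n n (eH x (1 + ((t + 1 : ℕ) : ℤ)))
        · have hyy : (1 + ((t + 1 : ℕ) : ℤ)) = y + 1 := by push_cast; omega
          rw [hyy] at hg ⊢
          obtain ⟨hx1, hx2, hy1, hy2⟩ := (gridEdge_eH_iff n).1 hg
          have hc : isCell n n x y := ⟨hx1, hx2, by omega, by omega⟩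
          have h := hcell x y hc
          rw [cellCount_eq] at h
          rw [if_neg (show eH x y ∉ E from (ih x).1), if_neg (hVrow x),
            if_neg (hVrow (x + 1))] at h
          simp only [zero_add, add_zero] at h
          by_contra hmem
          rw [if_pos hmem] at h
          exact (Nat.not_even_iff_odd.2 odd_one) h
        · exact hnot _ hg
      · have hyy : (((t + 1 : ℕ) : ℤ)) = y := by push_cast; omega
        rw [hyy]
        exact hVrow x
  ext e
  simp only [Set.mem_empty_iff_false, iff_false]
  intro he
  rcases (gridEdge_iff n).1 (hgrid e he) with ⟨x, y, h1, h2, h3, h4, rfl⟩ |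
    ⟨x, y, h1, h2, h3, h4, rfl⟩
  · have := (main (y - 1).toNat x).1
    rw [show (1 + ((y - 1).toNat : ℤ)) = y by omega] at this
    exact this he
  · have := (main y.toNat x).2
    rw [show ((y.toNat : ℤ)) = y by omega] at this
    exact this he

end Aux4

section Count
open Finset

variable (n : ℤ)

/-- The finset of all edges of the `n × n` grid. -/
noncomputable def edgesF : Finset Edge :=
  ((Finset.Icc 1 (n - 1) ×ˢ Finset.Icc 1 n).image fun q => eH q.1 q.2) ∪
  ((Finset.Icc 1 n ×ˢ Finset.Icc 1 (n - 1)).image fun q => eV q.1 q.2)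

lemma mem_edgesF {e : Edge} : e ∈ edgesF n ↔ gridEdge n n e := by
  rw [edgesF, gridEdge_iff, Finset.mem_union]
  constructor
  · rintro (h | h)
    · obtain ⟨⟨x, y⟩, hq, rfl⟩ := Finset.mem_image.1 h
      rw [Finset.mem_product, Finset.mem_Icc, Finset.mem_Icc] at hq
      exact Or.inl ⟨x, y, hq.1.1, by omega, hq.2.1, hq.2.2, rfl⟩
    · obtain ⟨⟨x, y⟩, hq, rfl⟩ := Finset.mem_image.1 h
      rw [Finset.mem_product, Finset.mem_Icc, Finset.mem_Icc] at hq
      exact Or.inr ⟨x, y, hq.1.1, hq.1.2, hq.2.1, by omega, rfl⟩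
  · rintro (⟨x, y, h1, h2, h3, h4, rfl⟩ | ⟨x, y, h1, h2, h3, h4, rfl⟩)
    · exact Or.inl (Finset.mem_image.2 ⟨(x, y), Finset.mem_product.2
        ⟨Finset.mem_Icc.2 ⟨h1, by omega⟩, Finset.mem_Icc.2 ⟨h3, h4⟩⟩, rfl⟩)
    · exact Or.inr (Finset.mem_image.2 ⟨(x, y), Finset.mem_product.2
        ⟨Finset.mem_Icc.2 ⟨h1, h2⟩, Finset.mem_Icc.2 ⟨h3, by omega⟩⟩, rfl⟩)

/-- Reflection across the main diagonal. -/
def rho : Edge → Edge := Sym2.map (fun p : V => (p.2, p.1))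

/-- Point reflection-like symmetry across the antidiagonal. -/
def tau : Edge → Edge := Sym2.map (fun p : V => (n + 1 - p.2, n + 1 - p.1))

lemma rho_eH (x y : ℤ) : rho (eH x y) = eV y x := by
  rw [rho, eH, Sym2.map_pair_eq, eV]

lemma rho_eV (x y : ℤ) : rho (eV x y) = eH y x := by
  rw [rho, eV, Sym2.map_pair_eq, eH]

lemma tau_eH (x y : ℤ) : tau n (eH x y) = eV (n + 1 - y) (n - x) := by
  rw [tau, eH, Sym2.map_pair_eq, eV, Sym2.eq_iff]
  right
  dsimp only
  simp only [Prod.mk.injEq, true_and, and_true]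
  exact ⟨by ring, by ring⟩

lemma tau_eV (x y : ℤ) : tau n (eV x y) = eH (n - y) (n + 1 - x) := by
  rw [tau, eV, Sym2.map_pair_eq, eH, Sym2.eq_iff]
  right
  dsimp only
  simp only [Prod.mk.injEq, true_and, and_true]
  exact ⟨by ring, by ring⟩

lemma sg_rho (e : Edge) : sg (rho e) = sg e := by
  induction e using Sym2.ind with
  | _ p q => rw [rho, Sym2.map_pair_eq, sg_mk, sg_mk]; ring

lemma dl_rho (e : Edge) : dl (rho e) = -dl e := by
  induction e using Sym2.ind with
  | _ p q => rw [rho, Sym2.map_pair_eq, dl_mk, dl_mk]; ring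

lemma sg_tau (e : Edge) : sg (tau n e) = 4 * n + 4 - sg e := by
  induction e using Sym2.ind with
  | _ p q => rw [tau, Sym2.map_pair_eq, sg_mk, sg_mk]; ring

lemma dl_tau (e : Edge) : dl (tau n e) = dl e := by
  induction e using Sym2.ind with
  | _ p q => rw [tau, Sym2.map_pair_eq, dl_mk, dl_mk]; ring

lemma rho_rho (e : Edge) : rho (rho e) = e := by
  induction e using Sym2.ind with
  | _ p q => simp [rho, Sym2.map_pair_eq]

lemma tau_tau (e : Edge) : tau n (tau n e) = e := by
  induction e using Sym2.ind with
  | _ p q => simp [tau, Sym2.map_pair_eq, sub_sub_cancel]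

lemma idxI_rho (e : Edge) : idxI n (rho e) = idxI n e := by
  rw [idxI, idxI, sg_rho]

lemma idxJ_rho (e : Edge) : idxJ (rho e) = idxJ e := by
  rw [idxJ, idxJ, dl_rho]; omega

lemma idxI_tau (e : Edge) : idxI n (tau n e) = idxI n e := by
  rw [idxI, idxI, sg_tau]; omega

lemma idxJ_tau (e : Edge) : idxJ (tau n e) = idxJ e := by
  rw [idxJ, idxJ, dl_tau]

lemma gridEdge_rho {e : Edge} (h : gridEdge n n e) : gridEdge n n (rho e) := by
  rcases (gridEdge_iff n).1 h with ⟨x, y, h1, h2, h3, h4, rfl⟩ | ⟨x, y, h1, h2, h3, h4, rfl⟩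
  · rw [rho_eH]; exact (gridEdge_eV_iff n).2 ⟨h3, h4, h1, h2⟩
  · rw [rho_eV]; exact (gridEdge_eH_iff n).2 ⟨h3, h4, h1, h2⟩

lemma gridEdge_tau {e : Edge} (h : gridEdge n n e) : gridEdge n n (tau n e) := by
  rcases (gridEdge_iff n).1 h with ⟨x, y, h1, h2, h3, h4, rfl⟩ | ⟨x, y, h1, h2, h3, h4, rfl⟩
  · rw [tau_eH]; exact (gridEdge_eV_iff n).2 ⟨by omega, by omega, by omega, by omega⟩
  · rw [tau_eV]; exact (gridEdge_eH_iff n).2 ⟨by omega, by omega, by omega, by omega⟩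

lemma sg_odd {e : Edge} (h : gridEdge n n e) : sg e % 2 = 1 := by
  rcases (gridEdge_iff n).1 h with ⟨x, y, -, -, -, -, rfl⟩ | ⟨x, y, -, -, -, -, rfl⟩ <;>
    [rw [sg_eH]; rw [sg_eV]] <;> omega

lemma dl_odd {e : Edge} (h : gridEdge n n e) : dl e % 2 ≠ 0 := by
  rcases (gridEdge_iff n).1 h with ⟨x, y, -, -, -, -, rfl⟩ | ⟨x, y, -, -, -, -, rfl⟩ <;>
    [rw [dl_eH]; rw [dl_eV]] <;> omega

end Count

section Count2
open Finset

variable (n : ℤ)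

/-- The model edge set as a finset. -/
noncomputable def Mf (g : ℤ → Bool) : Finset Edge :=
  (edgesF n).filter (fun e => g (idxI n e) ≠ g (idxJ e))

lemma MSet_coe (g : ℤ → Bool) : MSet n g = ↑(Mf n g) := by
  ext e
  rw [MSet, Mf]
  simp only [Set.mem_setOf_eq, Finset.coe_filter, mem_edgesF, Set.mem_setOf_eq]

/-- The finset of index pairs `(i, j)` with `1 ≤ j < i ≤ n` and `g i ≠ g j`. -/
noncomputable def Pf (g : ℤ → Bool) : Finset (ℤ × ℤ) :=
  (Finset.Icc 1 n ×ˢ Finset.Icc 1 n).filter (fun q => q.2 < q.1 ∧ g q.1 ≠ g q.2)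

lemma card_B_eq_A (g : ℤ → Bool) :
    ((Mf n g).filter (fun e => ¬ 0 < dl e)).card = ((Mf n g).filter (fun e => 0 < dl e)).card := by
  apply Finset.card_bij' (fun e _ => rho e) (fun e _ => rho e)
  · intro e he
    rw [Finset.mem_filter, Mf, Finset.mem_filter, mem_edgesF] at he ⊢
    obtain ⟨⟨hg, hpred⟩, hdl⟩ := he
    have hodd := dl_odd n hg
    refine ⟨⟨(mem_edgesF n).1 ((mem_edgesF n).2 (gridEdge_rho n hg)), ?_⟩, ?_⟩
    · rwa [idxI_rho, idxJ_rho]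
    · rw [dl_rho]; omega
  · intro e he
    rw [Finset.mem_filter, Mf, Finset.mem_filter, mem_edgesF] at he ⊢
    obtain ⟨⟨hg, hpred⟩, hdl⟩ := he
    refine ⟨⟨(mem_edgesF n).1 ((mem_edgesF n).2 (gridEdge_rho n hg)), ?_⟩, ?_⟩
    · rwa [idxI_rho, idxJ_rho]
    · rw [dl_rho]; omega
  · intro e _; exact rho_rho e
  · intro e _; exact rho_rho e

lemma card_A2_eq_A1 (g : ℤ → Bool) :
    (((Mf n g).filter (fun e => 0 < dl e)).filter (fun e => ¬ sg e ≤ 2 * n + 1)).card =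
    (((Mf n g).filter (fun e => 0 < dl e)).filter (fun e => sg e ≤ 2 * n + 1)).card := by
  apply Finset.card_bij' (fun e _ => tau n e) (fun e _ => tau n e)
  · intro e he
    rw [Finset.mem_filter, Finset.mem_filter, Mf, Finset.mem_filter, mem_edgesF] at he ⊢
    obtain ⟨⟨⟨hg, hpred⟩, hdl⟩, hsg⟩ := he
    have hodd := sg_odd n hg
    refine ⟨⟨⟨(mem_edgesF n).1 ((mem_edgesF n).2 (gridEdge_tau n hg)), ?_⟩, ?_⟩, ?_⟩
    · rwa [idxI_tau, idxJ_tau]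
    · rwa [dl_tau]
    · rw [sg_tau]; omega
  · intro e he
    rw [Finset.mem_filter, Finset.mem_filter, Mf, Finset.mem_filter, mem_edgesF] at he ⊢
    obtain ⟨⟨⟨hg, hpred⟩, hdl⟩, hsg⟩ := he
    have hodd := sg_odd n hg
    refine ⟨⟨⟨(mem_edgesF n).1 ((mem_edgesF n).2 (gridEdge_tau n hg)), ?_⟩, ?_⟩, ?_⟩
    · rwa [idxI_tau, idxJ_tau]
    · rwa [dl_tau]
    · rw [sg_tau]; omega
  · intro e _; exact tau_tau n e
  · intro e _; exact tau_tau n e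

lemma card_A1_eq_Pf (g : ℤ → Bool) :
    (((Mf n g).filter (fun e => 0 < dl e)).filter (fun e => sg e ≤ 2 * n + 1)).card =
    (Pf n g).card := by
  apply Finset.card_bij' (fun e _ => ((sg e - 1) / 2, (dl e + 1) / 2))
    (fun q _ => if (q.1 + q.2) % 2 = 1 then eH ((q.1 + q.2 - 1) / 2) ((q.1 - q.2 + 1) / 2)
      else eV ((q.1 + q.2) / 2) ((q.1 - q.2) / 2))
  · -- forward map lands in Pf
    intro e he
    rw [Finset.mem_filter, Finset.mem_filter, Mf, Finset.mem_filter, mem_edgesF] at he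
    obtain ⟨⟨⟨hg, hpred⟩, hdl⟩, hsg⟩ := he
    have hI : idxI n e = (sg e - 1) / 2 := by rw [idxI]; omega
    have hJ : idxJ e = (dl e + 1) / 2 := by rw [idxJ]; omega
    rw [hI, hJ] at hpred
    rw [Pf, Finset.mem_filter, Finset.mem_product, Finset.mem_Icc, Finset.mem_Icc]
    dsimp only
    rcases (gridEdge_iff n).1 hg with ⟨x, y, h1, h2, h3, h4, rfl⟩ | ⟨x, y, h1, h2, h3, h4, rfl⟩
    · rw [sg_eH] at hsg ⊢
      rw [dl_eH] at hdl ⊢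
      refine ⟨⟨⟨by omega, by omega⟩, by omega, by omega⟩, by omega, ?_⟩
      rw [sg_eH, dl_eH] at hpred
      exact hpred
    · rw [sg_eV] at hsg ⊢
      rw [dl_eV] at hdl ⊢
      refine ⟨⟨⟨by omega, by omega⟩, by omega, by omega⟩, by omega, ?_⟩
      rw [sg_eV, dl_eV] at hpred
      exact hpred
  · -- inverse map lands in A1
    rintro ⟨i, j⟩ hq
    rw [Pf, Finset.mem_filter, Finset.mem_product, Finset.mem_Icc, Finset.mem_Icc] at hq
    obtain ⟨⟨⟨hq1, hq2⟩, hq3, hq4⟩, hlt, hgq⟩ := hq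
    dsimp only at hlt hgq ⊢
    rw [Finset.mem_filter, Finset.mem_filter, Mf, Finset.mem_filter, mem_edgesF]
    by_cases hpar : (i + j) % 2 = 1
    · rw [if_pos hpar]
      have hgr : gridEdge n n (eH ((i + j - 1) / 2) ((i - j + 1) / 2)) :=
        (gridEdge_eH_iff n).2 ⟨by omega, by omega, by omega, by omega⟩
      have hI : idxI n (eH ((i + j - 1) / 2) ((i - j + 1) / 2)) = i := by
        rw [idxI_eH]; omega
      have hJ : idxJ (eH ((i + j - 1) / 2) ((i - j + 1) / 2)) = j := by
        rw [idxJ_eH]; omega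
      refine ⟨⟨⟨hgr, ?_⟩, ?_⟩, ?_⟩
      · rw [hI, hJ]; exact hgq
      · rw [dl_eH]; omega
      · rw [sg_eH]; omega
    · rw [if_neg hpar]
      have hgr : gridEdge n n (eV ((i + j) / 2) ((i - j) / 2)) :=
        (gridEdge_eV_iff n).2 ⟨by omega, by omega, by omega, by omega⟩
      have hI : idxI n (eV ((i + j) / 2) ((i - j) / 2)) = i := by
        rw [idxI_eV]; omega
      have hJ : idxJ (eV ((i + j) / 2) ((i - j) / 2)) = j := by
        rw [idxJ_eV]; omega
      refine ⟨⟨⟨hgr, ?_⟩, ?_⟩, ?_⟩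
      · rw [hI, hJ]; exact hgq
      · rw [dl_eV]; omega
      · rw [sg_eV]; omega
  · -- left inverse
    intro e he
    rw [Finset.mem_filter, Finset.mem_filter, Mf, Finset.mem_filter, mem_edgesF] at he
    obtain ⟨⟨⟨hg, -⟩, hdl⟩, hsg⟩ := he
    rcases (gridEdge_iff n).1 hg with ⟨x, y, h1, h2, h3, h4, rfl⟩ | ⟨x, y, h1, h2, h3, h4, rfl⟩
    · rw [sg_eH] at hsg
      rw [dl_eH] at hdl
      dsimp only
      rw [sg_eH, dl_eH]
      rw [if_pos (by omega)]
      rw [eH_eq_eH]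
      omega
    · rw [sg_eV] at hsg
      rw [dl_eV] at hdl
      dsimp only
      rw [sg_eV, dl_eV]
      rw [if_neg (by omega)]
      rw [eV_eq_eV]
      omega
  · -- right inverse
    rintro ⟨i, j⟩ hq
    rw [Pf, Finset.mem_filter, Finset.mem_product, Finset.mem_Icc, Finset.mem_Icc] at hq
    obtain ⟨⟨⟨hq1, hq2⟩, hq3, hq4⟩, hlt, -⟩ := hq
    dsimp only at hlt ⊢
    by_cases hpar : (i + j) % 2 = 1
    · rw [if_pos hpar, sg_eH, dl_eH, Prod.mk.injEq]
      constructor <;> omega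
    · rw [if_neg hpar, sg_eV, dl_eV, Prod.mk.injEq]
      constructor <;> omega

lemma card_Mf_eq (g : ℤ → Bool) : (Mf n g).card = 4 * (Pf n g).card := by
  have hsplit1 := Finset.card_filter_add_card_filter_not
    (s := Mf n g) (p := fun e => 0 < dl e)
  have hsplit2 := Finset.card_filter_add_card_filter_not
    (s := (Mf n g).filter (fun e => 0 < dl e)) (p := fun e => sg e ≤ 2 * n + 1)
  have h1 := card_B_eq_A n g
  have h2 := card_A2_eq_A1 n g
  have h3 := card_A1_eq_Pf n g
  omega

end Count2

section Count3
open Finset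

variable (n : ℤ)

lemma card_Pf (g : ℤ → Bool) :
    (Pf n g).card = ((Finset.Icc 1 n).filter (fun j => g j = true)).card *
      ((Finset.Icc 1 n).filter (fun j => ¬ g j = true)).card := by
  rw [← Finset.card_product]
  apply Finset.card_bij' (fun q _ => if g q.1 then (q.1, q.2) else (q.2, q.1))
    (fun p _ => (max p.1 p.2, min p.1 p.2))
  · rintro ⟨i, j⟩ hq
    rw [Pf, Finset.mem_filter, Finset.mem_product, Finset.mem_Icc, Finset.mem_Icc] at hq
    obtain ⟨⟨⟨h1, h2⟩, h3, h4⟩, hlt, hgq⟩ := hq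
    dsimp only at hlt hgq ⊢
    by_cases hgi : g i
    · rw [if_pos hgi, Finset.mem_product]
      constructor
      · rw [Finset.mem_filter, Finset.mem_Icc]; exact ⟨⟨h1, h2⟩, hgi⟩
      · rw [Finset.mem_filter, Finset.mem_Icc]
        exact ⟨⟨h3, h4⟩, fun hgj => hgq (by rw [hgi, hgj])⟩
    · rw [if_neg hgi, Finset.mem_product]
      simp only [Bool.not_eq_true] at hgi
      have hgj : g j = true := by
        rcases Bool.dichotomy (g j) with h | h
        · exact absurd (hgi.trans h.symm) hgq
        · exact h
      constructor
      · rw [Finset.mem_filter, Finset.mem_Icc]; exact ⟨⟨h3, h4⟩, hgj⟩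
      · rw [Finset.mem_filter, Finset.mem_Icc]
        exact ⟨⟨h1, h2⟩, by simp [hgi]⟩
  · rintro ⟨a, b⟩ hp
    rw [Finset.mem_product, Finset.mem_filter, Finset.mem_filter,
      Finset.mem_Icc, Finset.mem_Icc] at hp
    obtain ⟨⟨⟨ha1, ha2⟩, hga⟩, ⟨hb1, hb2⟩, hgb⟩ := hp
    simp only [Bool.not_eq_true] at hgb
    have hne : a ≠ b := by
      intro h; rw [h, hgb] at hga; exact Bool.noConfusion hga
    rw [Pf, Finset.mem_filter, Finset.mem_product, Finset.mem_Icc, Finset.mem_Icc]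
    dsimp only
    refine ⟨⟨⟨by omega, by omega⟩, by omega, by omega⟩, by omega, ?_⟩
    rcases lt_or_gt_of_ne hne with h | h
    · rw [show max a b = b from by omega, show min a b = a from by omega, hga, hgb]
      simp
    · rw [show max a b = a from by omega, show min a b = b from by omega, hga, hgb]
      simp
  · rintro ⟨i, j⟩ hq
    rw [Pf, Finset.mem_filter, Finset.mem_product, Finset.mem_Icc, Finset.mem_Icc] at hq
    obtain ⟨⟨⟨h1, h2⟩, h3, h4⟩, hlt, hgq⟩ := hq
    dsimp only at hlt ⊢
    by_cases hgi : g i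
    · rw [if_pos hgi]
      dsimp only
      rw [Prod.mk.injEq]
      constructor <;> omega
    · rw [if_neg hgi]
      dsimp only
      rw [Prod.mk.injEq]
      constructor <;> omega
  · rintro ⟨a, b⟩ hp
    rw [Finset.mem_product, Finset.mem_filter, Finset.mem_filter,
      Finset.mem_Icc, Finset.mem_Icc] at hp
    obtain ⟨⟨⟨ha1, ha2⟩, hga⟩, ⟨hb1, hb2⟩, hgb⟩ := hp
    simp only [Bool.not_eq_true] at hgb
    have hne : a ≠ b := by
      intro h; rw [h, hgb] at hga; exact Bool.noConfusion hga
    dsimp only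
    rcases lt_or_gt_of_ne hne with h | h
    · rw [show max a b = b from by omega, show min a b = a from by omega]
      rw [if_neg (by simp [hgb])]
    · rw [show max a b = a from by omega, show min a b = b from by omega]
      rw [if_pos hga]

lemma card_Mf_final (g : ℤ → Bool) (hn : 0 ≤ n) :
    ∃ u v : ℤ, 0 ≤ u ∧ 0 ≤ v ∧ u + v = n ∧ ((Mf n g).card : ℤ) = 4 * u * v := by
  have hsum : ((Finset.Icc 1 n).filter (fun j => g j = true)).card +
      ((Finset.Icc 1 n).filter (fun j => ¬ g j = true)).card = n.toNat := by
    have h := Finset.card_filter_add_card_filter_not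
      (s := Finset.Icc 1 n) (p := fun j => g j = true)
    rw [Int.card_Icc] at h
    omega
  refine ⟨(((Finset.Icc 1 n).filter (fun j => g j = true)).card : ℤ),
    (((Finset.Icc 1 n).filter (fun j => ¬ g j = true)).card : ℤ),
    Int.natCast_nonneg _, Int.natCast_nonneg _, ?_, ?_⟩
  · have h2 : ((n.toNat : ℤ)) = n := Int.toNat_of_nonneg hn
    omega
  · rw [card_Mf_eq, card_Pf]
    push_cast
    ring

end Count3

section Final
open Finset

variable (n : ℤ)

lemma bottom_mem_MSet (g : ℤ → Bool) (x : ℤ) (hx1 : 1 ≤ x) (hx2 : x + 1 ≤ n) :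
    eH x 1 ∈ MSet n g ↔ g (x + 1) ≠ g x := by
  have hI : idxI n (eH x 1) = x + 1 := by rw [idxI_eH]; omega
  have hJ : idxJ (eH x 1) = x := by rw [idxJ_eH]; omega
  constructor
  · rintro ⟨-, h⟩; rwa [hI, hJ] at h
  · intro h
    exact ⟨(gridEdge_eH_iff n).2 ⟨hx1, hx2, le_refl 1, by omega⟩, by rwa [hI, hJ]⟩

theorem forward_dir (hn : 0 ≤ n) {E : Set Edge} (hE : TotallyEven n n E) :
    ∃ u v : ℤ, 0 ≤ u ∧ 0 ≤ v ∧ u + v = n ∧ (E.ncard : ℤ) = 4 * u * v := by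
  classical
  set c : ℤ → ℕ := fun j => ((Finset.Icc 1 (j - 1)).filter (fun x => eH x 1 ∈ E)).card with hc
  set g : ℤ → Bool := fun j => decide (Odd (c j)) with hgdef
  have hstep : ∀ x : ℤ, 1 ≤ x → ((g (x + 1) ≠ g x) ↔ eH x 1 ∈ E) := by
    intro x hx
    have hins : Finset.Icc 1 (x + 1 - 1) = insert x (Finset.Icc 1 (x - 1)) := by
      ext t
      simp only [Finset.mem_Icc, Finset.mem_insert]
      omega
    have hnotmem : x ∉ Finset.Icc 1 (x - 1) := by
      rw [Finset.mem_Icc]; omega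
    have hcc : c (x + 1) = c x + (if eH x 1 ∈ E then 1 else 0) := by
      rw [hc]
      dsimp only
      rw [hins, Finset.filter_insert]
      by_cases hmem : eH x 1 ∈ E
      · rw [if_pos hmem, if_pos hmem, Finset.card_insert_of_notMem
          (fun hcon => hnotmem (Finset.mem_of_mem_filter _ hcon))]
      · rw [if_neg hmem, if_neg hmem, add_zero]
    have hgg : ∀ j : ℤ, g j = decide (Odd (c j)) := fun j => rfl
    rw [Ne, hgg, hgg, decide_eq_decide, hcc]
    by_cases hmem : eH x 1 ∈ E
    · rw [if_pos hmem]
      simp only [Nat.odd_iff, iff_true_intro hmem, iff_true]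
      omega
    · rw [if_neg hmem]
      simp only [Nat.odd_iff, iff_false_intro hmem, iff_false, not_not]
      omega
  have hmatch : ∀ x : ℤ, (eH x 1 ∈ MSet n g ↔ eH x 1 ∈ E) := by
    intro x
    by_cases hx : 1 ≤ x ∧ x + 1 ≤ n
    · rw [bottom_mem_MSet n g x hx.1 hx.2]
      exact hstep x hx.1
    · have hng : ¬ gridEdge n n (eH x 1) := by
        rw [gridEdge_eH_iff]
        intro hcon
        exact hx ⟨hcon.1, hcon.2.1⟩
      constructor
      · intro hm; exact absurd (hm.1) hng
      · intro hm; exact absurd (hE.1 _ hm) hng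
  have hD : TotallyEven n n (sdiff E (MSet n g)) :=
    totallyEven_sdiff n hE (totallyEven_MSet n g)
  have hDbot : ∀ x : ℤ, eH x 1 ∉ sdiff E (MSet n g) := by
    intro x
    rw [sdiff]
    rintro (⟨h1, h2⟩ | ⟨h1, h2⟩)
    · exact h2 ((hmatch x).2 h1)
    · exact h2 ((hmatch x).1 h1)
  have hEM : E = MSet n g := sdiff_eq_empty (rigidity n hD hDbot)
  obtain ⟨u, v, hu, hv, huv, hcard⟩ := card_Mf_final n g hn
  refine ⟨u, v, hu, hv, huv, ?_⟩
  rw [hEM, MSet_coe, Set.ncard_coe_finset]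
  exact hcard

theorem converse_dir (hn : 0 ≤ n) (u v : ℤ) (hu : 0 ≤ u) (hv : 0 ≤ v) (huv : u + v = n) :
    ∃ E : Set Edge, TotallyEven n n E ∧ (E.ncard : ℤ) = 4 * u * v := by
  classical
  set g : ℤ → Bool := fun j => decide (1 ≤ j ∧ j ≤ u) with hgdef
  refine ⟨MSet n g, totallyEven_MSet n g, ?_⟩
  rw [MSet_coe, Set.ncard_coe_finset, card_Mf_eq, card_Pf]
  have hS : (Finset.Icc 1 n).filter (fun j => g j = true) = Finset.Icc 1 u := by
    ext t
    rw [Finset.mem_filter, Finset.mem_Icc, Finset.mem_Icc, hgdef]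
    simp only [decide_eq_true_eq]
    omega
  have hT : (Finset.Icc 1 n).filter (fun j => ¬ g j = true) = Finset.Icc (u + 1) n := by
    ext t
    rw [Finset.mem_filter, Finset.mem_Icc, Finset.mem_Icc, hgdef]
    simp only [decide_eq_true_eq]
    omega
  rw [hS, hT, Int.card_Icc, Int.card_Icc]
  have h1 : ((u + 1 - 1).toNat : ℤ) = u := by omega
  have h2 : ((n + 1 - (u + 1)).toNat : ℤ) = v := by omega
  push_cast [h1, h2]
  ring

end Final

theorem stmt4 (n : ℤ) (hn : 0 ≤ n) :
    (∀ E : Set Edge, TotallyEven n n E →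
      ∃ u v : ℤ, 0 ≤ u ∧ 0 ≤ v ∧ u + v = n ∧ (E.ncard : ℤ) = 4 * u * v) ∧
    (∀ u v : ℤ, 0 ≤ u → 0 ≤ v → u + v = n →
      ∃ E : Set Edge, TotallyEven n n E ∧ (E.ncard : ℤ) = 4 * u * v) :=
  ⟨fun _ hE => forward_dir n hn hE, fun u v hu hv huv => converse_dir n hn u v hu hv huv⟩

end Slitherlink
end
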